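/- In the example setting, let λ_e be the unique zero of Φ_e and, for q > 1 close enough to 1, let λ̃_q be the unique zero of Φ(·, q) in (γ₁(q), γ₂(q)). Then lim_{q ↓ 1} λ̃_q = λ_e. -/

import Mathlib

open MeasureTheory
open scoped Real

noncomputable section

/-- The truncation function `h(x) = x · 1_{|x| ≤ 1}` on `ℝ`. -/
def trunc (x : ℝ) : ℝ := if |x| ≤ 1 then x else 0

/-- `Φ(λ, q) = b + cλ + ∫₋₁^ℓ (x ((q-1)λx + 1)^{1/(q-1)} - h(x)) f(x) dx`. -/
def Phi (b c ℓ : ℝ) (f : ℝ → ℝ) (lam q : ℝ) : ℝ :=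
  b + c * lam +
    ∫ x in Set.Ioo (-1 : ℝ) ℓ, (x * ((q - 1) * lam * x + 1) ^ (1 / (q - 1)) - trunc x) * f x

/-- `Φ_e(λ) = b + cλ + ∫₋₁^ℓ (x e^{λx} - h(x)) f(x) dx`. -/
def PhiE (b c ℓ : ℝ) (f : ℝ → ℝ) (lam : ℝ) : ℝ :=
  b + c * lam + ∫ x in Set.Ioo (-1 : ℝ) ℓ, (x * Real.exp (lam * x) - trunc x) * f x

/-- `γ₁(q) = -1/((q-1) max(1,ℓ))`. -/
def gam1 (ℓ q : ℝ) : ℝ := -(1 / ((q - 1) * max 1 ℓ))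

/-- `γ₂(q) = 1/(q-1)`. -/
def gam2 (q : ℝ) : ℝ := 1 / (q - 1)

/-- `δ₁ = c + ∫₋₁⁰ x² f(x) dx`. -/
def del1 (c : ℝ) (f : ℝ → ℝ) : ℝ := c + ∫ x in Set.Ioo (-1 : ℝ) 0, x ^ 2 * f x

/-- `δ₂ = c + ∫₀^ℓ x² f(x) dx`. -/
def del2 (c ℓ : ℝ) (f : ℝ → ℝ) : ℝ := c + ∫ x in Set.Ioo (0 : ℝ) ℓ, x ^ 2 * f x

/-- `δ = min(δ₁, δ₂)`. -/
def del (c ℓ : ℝ) (f : ℝ → ℝ) : ℝ := min (del1 c f) (del2 c ℓ f)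

/-- `b₀ = b + ∫₋₁^ℓ (x - h(x)) f(x) dx`. -/
def bZero (b ℓ : ℝ) (f : ℝ → ℝ) : ℝ :=
  b + ∫ x in Set.Ioo (-1 : ℝ) ℓ, (x - trunc x) * f x

/-- The hypotheses of the example setting: `d = 1`, `c ≥ 0`, `0 < ℓ < ∞`,
`f` a bounded measurable density vanishing outside `(-1, ℓ)`, and, if `c = 0`,
jumps of both positive and negative heights. -/
structure ExampleSetting (c ℓ : ℝ) (f : ℝ → ℝ) : Prop where
  hc : 0 ≤ c
  hl : 0 < ℓ
  hfmeas : Measurable f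
  hfnonneg : ∀ x, 0 ≤ f x
  hfbdd : ∃ M : ℝ, ∀ x, f x ≤ M
  hsupp : ∀ x, x ∉ Set.Ioo (-1 : ℝ) ℓ → f x = 0
  hjumps : c = 0 →
    (0 < ∫ x in Set.Ioo (-1 : ℝ) 0, f x) ∧ (0 < ∫ x in Set.Ioo (0 : ℝ) ℓ, f x)

/-! For `q > 1` write `e_q(u) = ((q - 1) u + 1) ^ (1 / (q - 1))`, so that the integrand of `Φ(λ, q)`
is `x e_q(λx) - h(x)`. On the window `(γ₁(q), γ₂(q))` the base of `e_q(λx)` stays positive for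
`x ∈ (-1, ℓ)`, so `Φ(·, q)` is nondecreasing there; the window exhausts `ℝ` as `q ↓ 1`; and since
`e_q(u) ≤ e^u` and `e_q(u) → e^u`, dominated convergence gives `Φ(λ, q) → Φ_e(λ)` for each `λ`.
Then `Φ_e` is nondecreasing with the single zero `λ_e`, so `Φ_e(λ_e - ε) < 0 < Φ_e(λ_e + ε)`; for
`q` near `1` the same signs hold for `Φ(λ_e ± ε, q)`, which traps `λ̃_q` in `(λ_e - ε, λ_e + ε)`. -/

open Filter Set Topology

theorem tendsto_of_monotoneOn_of_unique_level {ι α β : Type*} {l : Filter ι} [l.NeBot]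
    [LinearOrder α] [TopologicalSpace α] [OrderTopology α]
    [LinearOrder β] [TopologicalSpace β] [OrderTopology β]
    {F : ι → α → β} {G : α → β} {S : ι → Set α} {x : ι → α} {x₀ : α} {v : β}
    (hF : ∀ᶠ i in l, MonotoneOn (F i) (S i)) (hS : ∀ y, ∀ᶠ i in l, y ∈ S i)
    (hFG : ∀ y, Tendsto (fun i => F i y) l (𝓝 (G y)))
    (hG : G x₀ = v) (hG_unique : ∀ y, G y = v → y = x₀)
    (hx : ∀ᶠ i in l, x i ∈ S i ∧ F i (x i) = v) :
    Tendsto x l (𝓝 x₀) := by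
  have hG_mono : Monotone G := fun y z hyz =>
    le_of_tendsto_of_tendsto (hFG y) (hFG z) <| by
      filter_upwards [hF, hS y, hS z] with i hi hy hz using hi hy hz hyz
  refine tendsto_order.2 ⟨fun a ha => ?_, fun a ha => ?_⟩
  · have hGa : G a < v := (hG ▸ hG_mono ha.le).lt_of_ne fun h => ha.ne (hG_unique a h)
    filter_upwards [(hFG a).eventually (eventually_lt_nhds hGa), hF, hS a, hx]
      with i hFa hmono ha' ⟨hxi, hzero⟩
    by_contra! hle
    exact (hmono hxi ha' hle).not_gt (hzero ▸ hFa)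
  · have hGa : v < G a := (hG ▸ hG_mono ha.le).lt_of_ne' fun h => ha.ne' (hG_unique a h)
    filter_upwards [(hFG a).eventually (eventually_gt_nhds hGa), hF, hS a, hx]
      with i hFa hmono ha' ⟨hxi, hzero⟩
    by_contra! hle
    exact (hmono ha' hxi hle).not_gt (hzero ▸ hFa)

def qExp (q u : ℝ) : ℝ := ((q - 1) * u + 1) ^ (1 / (q - 1))

lemma qExp_nonneg {q u : ℝ} (hu : 0 ≤ (q - 1) * u + 1) : 0 ≤ qExp q u :=
  Real.rpow_nonneg hu _

lemma qExp_le_exp {q u : ℝ} (hq : 1 < q) (hu : 0 ≤ (q - 1) * u + 1) :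
    qExp q u ≤ Real.exp u := by
  have hq' : 0 < q - 1 := sub_pos.2 hq
  calc qExp q u ≤ Real.exp ((q - 1) * u) ^ (1 / (q - 1)) :=
        Real.rpow_le_rpow hu (by linarith [Real.add_one_le_exp ((q - 1) * u)]) (by positivity)
    _ = Real.exp u := by rw [← Real.exp_mul]; field_simp

lemma monotoneOn_qExp {q : ℝ} (hq : 1 < q) :
    MonotoneOn (qExp q) {u | 0 ≤ (q - 1) * u + 1} := fun u hu v _ huv =>
  Real.rpow_le_rpow hu (by nlinarith) (one_div_nonneg.2 (sub_pos.2 hq).le)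

lemma tendsto_sub_one_inv : Tendsto (fun q : ℝ => (q - 1)⁻¹) (𝓝[>] 1) atTop := by
  refine tendsto_inv_nhdsGT_zero.comp (tendsto_nhdsWithin_of_tendsto_nhds_of_eventually_within _ ?_ ?_)
  · simpa using ((continuous_sub_right (1 : ℝ)).tendsto 1).mono_left nhdsWithin_le_nhds
  · filter_upwards [self_mem_nhdsWithin] with q (hq : 1 < q) using sub_pos.2 hq

lemma tendsto_qExp (u : ℝ) : Tendsto (fun q => qExp q u) (𝓝[>] 1) (𝓝 (Real.exp u)) := by
  refine ((Real.tendsto_one_add_div_rpow_exp u).comp tendsto_sub_one_inv).congr fun q => ?_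
  simp only [Function.comp, qExp, div_inv_eq_mul, one_div]
  ring_nf

lemma tendsto_gam1_atBot (ℓ : ℝ) : Tendsto (gam1 ℓ) (𝓝[>] 1) atBot := by
  have hL : (0 : ℝ) < max 1 ℓ := lt_max_of_lt_left one_pos
  refine (tendsto_neg_atTop_atBot.comp (tendsto_sub_one_inv.atTop_div_const hL)).congr fun q => ?_
  simp [gam1, div_eq_mul_inv, mul_comm]

lemma tendsto_gam2_atTop : Tendsto gam2 (𝓝[>] 1) atTop :=
  tendsto_sub_one_inv.congr fun _ => (one_div _).symm

lemma eventually_mem_window (ℓ lam : ℝ) : ∀ᶠ q in 𝓝[>] 1, lam ∈ Ioo (gam1 ℓ q) (gam2 q) :=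
  ((tendsto_gam1_atBot ℓ).eventually_lt_atBot lam).and (tendsto_gam2_atTop.eventually_gt_atTop lam)

lemma base_pos_of_mem_window {ℓ q lam x : ℝ} (hq : 1 < q)
    (hlam : lam ∈ Ioo (gam1 ℓ q) (gam2 q)) (hx : x ∈ Ioo (-1) ℓ) :
    0 < (q - 1) * (lam * x) + 1 := by
  obtain ⟨h1, h2⟩ := hlam
  obtain ⟨hx1, hx2⟩ := hx
  have hq' : 0 < q - 1 := sub_pos.2 hq
  have hL : ℓ ≤ max 1 ℓ := le_max_right _ _
  have hL1 : 1 ≤ max 1 ℓ := le_max_left _ _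
  rw [gam1, neg_lt, lt_div_iff₀ (by positivity)] at h1
  rw [gam2, lt_div_iff₀ hq'] at h2
  rcases le_total 0 x with hx0 | hx0 <;> nlinarith

lemma measurable_trunc : Measurable trunc :=
  Measurable.ite (measurableSet_le measurable_abs measurable_const) measurable_id measurable_const

lemma abs_trunc_le_one (x : ℝ) : |trunc x| ≤ 1 := by
  unfold trunc
  split_ifs with h
  · exact h
  · simp

lemma abs_le_max_one_of_mem_Ioo {ℓ x : ℝ} (hx : x ∈ Ioo (-1) ℓ) : |x| ≤ max 1 ℓ :=
  abs_le.2 ⟨by linarith [hx.1, le_max_left (1 : ℝ) ℓ], hx.2.le.trans (le_max_right _ _)⟩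

lemma abs_mul_qExp_sub_trunc_le {ℓ q lam x : ℝ} (hq : 1 < q)
    (hbase : 0 ≤ (q - 1) * (lam * x) + 1) (hx : x ∈ Ioo (-1) ℓ) :
    |x * qExp q (lam * x) - trunc x| ≤ max 1 ℓ * Real.exp (|lam| * max 1 ℓ) + 1 := by
  have hxL := abs_le_max_one_of_mem_Ioo hx
  have hexp : qExp q (lam * x) ≤ Real.exp (|lam| * max 1 ℓ) :=
    (qExp_le_exp hq hbase).trans <| Real.exp_le_exp.2 <|
      (le_abs_self _).trans (by rw [abs_mul]; gcongr)
  calc |x * qExp q (lam * x) - trunc x| ≤ |x * qExp q (lam * x)| + |trunc x| := abs_sub _ _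
    _ = |x| * qExp q (lam * x) + |trunc x| := by rw [abs_mul, abs_of_nonneg (qExp_nonneg hbase)]
    _ ≤ max 1 ℓ * Real.exp (|lam| * max 1 ℓ) + 1 := by
        gcongr
        · exact qExp_nonneg hbase
        · exact abs_trunc_le_one x

lemma measurable_mul_qExp_sub_trunc (q lam : ℝ) :
    Measurable fun x => x * qExp q (lam * x) - trunc x := by
  unfold qExp
  exact (measurable_id.mul (by fun_prop)).sub measurable_trunc

lemma mul_qExp_mul_le {q x lam₁ lam₂ : ℝ} (hq : 1 < q) (hle : lam₁ ≤ lam₂)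
    (h₁ : 0 ≤ (q - 1) * (lam₁ * x) + 1) (h₂ : 0 ≤ (q - 1) * (lam₂ * x) + 1) :
    x * qExp q (lam₁ * x) ≤ x * qExp q (lam₂ * x) := by
  rcases le_total 0 x with hx | hx
  · exact mul_le_mul_of_nonneg_left
      (monotoneOn_qExp hq h₁ h₂ (mul_le_mul_of_nonneg_right hle hx)) hx
  · exact mul_le_mul_of_nonpos_left
      (monotoneOn_qExp hq h₂ h₁ (mul_le_mul_of_nonpos_right hle hx)) hx

lemma phi_eq (b c ℓ : ℝ) (f : ℝ → ℝ) (lam q : ℝ) :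
    Phi b c ℓ f lam q =
      b + c * lam + ∫ x in Ioo (-1) ℓ, (x * qExp q (lam * x) - trunc x) * f x := by
  simp only [Phi, qExp, mul_assoc]

namespace ExampleSetting

variable {b c ℓ : ℝ} {f : ℝ → ℝ}

lemma exists_abs_le (hset : ExampleSetting c ℓ f) : ∃ M, ∀ x, |f x| ≤ M := by
  obtain ⟨M, hM⟩ := hset.hfbdd
  exact ⟨M, fun x => (abs_of_nonneg (hset.hfnonneg x)).trans_le (hM x)⟩

lemma integrableOn_mul (hset : ExampleSetting c ℓ f) {g : ℝ → ℝ} (hg : Measurable g) {C : ℝ}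
    (hC : ∀ x ∈ Ioo (-1) ℓ, |g x| ≤ C) :
    IntegrableOn (fun x => g x * f x) (Ioo (-1) ℓ) := by
  obtain ⟨M, hM⟩ := hset.exists_abs_le
  have hf : IntegrableOn f (Ioo (-1) ℓ) :=
    Measure.integrableOn_of_bounded measure_Ioo_lt_top.ne hset.hfmeas.aestronglyMeasurable
      (ae_of_all _ hM)
  exact hf.bdd_mul hg.aestronglyMeasurable ((ae_restrict_iff' measurableSet_Ioo).2 (ae_of_all _ hC))

lemma monotoneOn_phi (hset : ExampleSetting c ℓ f) {q : ℝ} (hq : 1 < q) :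
    MonotoneOn (fun lam => Phi b c ℓ f lam q) (Ioo (gam1 ℓ q) (gam2 q)) := by
  intro lam₁ h₁ lam₂ h₂ hle
  have hint : ∀ lam ∈ Ioo (gam1 ℓ q) (gam2 q),
      IntegrableOn (fun x => (x * qExp q (lam * x) - trunc x) * f x) (Ioo (-1) ℓ) :=
    fun lam hlam => hset.integrableOn_mul (measurable_mul_qExp_sub_trunc q lam) fun x hx =>
      abs_mul_qExp_sub_trunc_le hq (base_pos_of_mem_window hq hlam hx).le hx
  simp only [phi_eq]
  refine add_le_add (by gcongr; exact hset.hc)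
    (setIntegral_mono_on (hint _ h₁) (hint _ h₂) measurableSet_Ioo fun x hx => ?_)
  have hmono := mul_qExp_mul_le hq hle (base_pos_of_mem_window hq h₁ hx).le
    (base_pos_of_mem_window hq h₂ hx).le
  exact mul_le_mul_of_nonneg_right (sub_le_sub_right hmono _) (hset.hfnonneg x)

lemma tendsto_phi (hset : ExampleSetting c ℓ f) (lam : ℝ) :
    Tendsto (fun q => Phi b c ℓ f lam q) (𝓝[>] 1) (𝓝 (PhiE b c ℓ f lam)) := by
  obtain ⟨M, hM⟩ := hset.exists_abs_le
  simp only [phi_eq, PhiE]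
  refine tendsto_const_nhds.add (tendsto_integral_filter_of_dominated_convergence
    (fun _ => (max 1 ℓ * Real.exp (|lam| * max 1 ℓ) + 1) * M) ?_ ?_ (integrable_const _) ?_)
  · exact Eventually.of_forall fun q =>
      ((measurable_mul_qExp_sub_trunc q lam).mul hset.hfmeas).aestronglyMeasurable
  · filter_upwards [eventually_mem_window ℓ lam, self_mem_nhdsWithin] with q hlam (hq : 1 < q)
    refine (ae_restrict_iff' measurableSet_Ioo).2 (ae_of_all _ fun x hx => ?_)
    rw [Real.norm_eq_abs, abs_mul]
    exact mul_le_mul (abs_mul_qExp_sub_trunc_le hq (base_pos_of_mem_window hq hlam hx).le hx)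
      (hM x) (abs_nonneg _) (by positivity)
  · exact ae_of_all _ fun x =>
      (((tendsto_qExp (lam * x)).const_mul x).sub_const (trunc x)).mul_const (f x)

end ExampleSetting

/-- **Example, convergence of the Girsanov parameters**: if `λ_e` is the unique zero
of `Φ_e` and, for `q ∈ (1, q₀)`, `λ̃_q` is the unique zero of `Φ(·, q)` in
`(γ₁(q), γ₂(q))`, then `λ̃_q → λ_e` as `q ↓ 1`. -/
theorem stmt16 (b c ℓ : ℝ) (f : ℝ → ℝ) (hset : ExampleSetting c ℓ f)
    (lamE : ℝ) (hlamE : PhiE b c ℓ f lamE = 0)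
    (hlamEuniq : ∀ lam : ℝ, PhiE b c ℓ f lam = 0 → lam = lamE)
    (q₀ : ℝ) (hq₀ : 1 < q₀) (lamq : ℝ → ℝ)
    (hlamq : ∀ q : ℝ, 1 < q → q < q₀ →
      lamq q ∈ Set.Ioo (gam1 ℓ q) (gam2 q) ∧ Phi b c ℓ f (lamq q) q = 0 ∧
      ∀ lam ∈ Set.Ioo (gam1 ℓ q) (gam2 q), Phi b c ℓ f lam q = 0 → lam = lamq q) :
    Filter.Tendsto lamq (nhdsWithin 1 (Set.Ioi 1)) (nhds lamE) := by
  have hnear : ∀ᶠ q in 𝓝[>] 1, 1 < q ∧ q < q₀ := Ioo_mem_nhdsGT hq₀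
  refine tendsto_of_monotoneOn_of_unique_level (F := fun q lam => Phi b c ℓ f lam q)
    (S := fun q => Ioo (gam1 ℓ q) (gam2 q)) ?_ (eventually_mem_window ℓ)
    hset.tendsto_phi hlamE hlamEuniq ?_
  · filter_upwards [hnear] with q hq using hset.monotoneOn_phi hq.1
  · filter_upwards [hnear] with q hq
    exact ⟨(hlamq q hq.1 hq.2).1, (hlamq q hq.1 hq.2).2.1⟩
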